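/- Every odd natural number n > 1 with H(n) = k satisfies n > 2^{k−1}. -/

import Mathlib

/-- The height function: H(1) = 0 and H(n) = H(φ(n)) + 1 for n ≥ 2. -/
def H : ℕ → ℕ
  | 0 => 0
  | 1 => 0
  | n + 2 => H (Nat.totient (n + 2)) + 1
  decreasing_by exact Nat.totient_lt _ (by omega)

/-- The sum-of-heights function S(n) = ∑_{k=1}^n H(k). -/
def S (n : ℕ) : ℕ := ∑ k ∈ Finset.Icc 1 n, H k

/-!
For even `m ≥ 2` the totient halves at least: `φ m ≤ m / 2`, and `φ m` is again even as soon as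
`m > 2`. Iterating along the chain `m, φ m, φ (φ m), …` down to `2` gives `2 ^ H m ≤ m`.
An odd `n > 1` spends one step to reach the even number `φ n < n`, whence `2 ^ (H n - 1) < n`.
-/

open scoped Nat

lemma H_of_two_le {n : ℕ} (hn : 2 ≤ n) : H n = H (φ n) + 1 := by
  obtain ⟨m, rfl⟩ : ∃ m, n = m + 2 := ⟨n - 2, by omega⟩
  rw [H]

lemma totient_two_mul_le (j : ℕ) : φ (2 * j) ≤ j := by
  induction j using Nat.strong_induction_on with
  | _ j ih =>
    rcases Nat.even_or_odd j with ⟨i, rfl⟩ | hj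
    · rcases i.eq_zero_or_pos with rfl | hi
      · simp
      have hi' := ih i (by omega)
      rw [Nat.totient_two_mul_of_even ⟨i, rfl⟩, ← two_mul]
      omega
    · rw [Nat.totient_two_mul_of_odd hj]
      exact Nat.totient_le j

lemma two_pow_H_le_of_even {m : ℕ} (hm : Even m) (hm0 : 0 < m) : 2 ^ H m ≤ m := by
  induction m using Nat.strong_induction_on with
  | _ m ih =>
    obtain ⟨j, rfl⟩ := hm.two_dvd
    rcases (show j = 1 ∨ 1 < j by omega) with rfl | hj
    · rw [mul_one, H_of_two_le le_rfl, Nat.totient_two, H]; norm_num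
    have hφ_even : Even (φ (2 * j)) := Nat.totient_even (by omega)
    have hφ_pos : 0 < φ (2 * j) := Nat.totient_pos.mpr hm0
    have hφ := ih _ (Nat.totient_lt _ (by omega)) hφ_even hφ_pos
    calc 2 ^ H (2 * j) = 2 * 2 ^ H (φ (2 * j)) := by rw [H_of_two_le (by omega), pow_succ']
      _ ≤ 2 * φ (2 * j) := by omega
      _ ≤ 2 * j := by have := totient_two_mul_le j; omega

theorem odd_at_height_gt (n k : ℕ) (hn : 1 < n) (hodd : Odd n) (hH : H n = k) :
    2 ^ (k - 1) < n := by
  have hn2 : 2 < n := by rcases hodd with ⟨j, rfl⟩; omega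
  have hk : k - 1 = H (φ n) := by rw [← hH, H_of_two_le hn]; rfl
  rw [hk]
  calc 2 ^ H (φ n) ≤ φ n :=
        two_pow_H_le_of_even (Nat.totient_even hn2) (Nat.totient_pos.mpr (by omega))
    _ < n := Nat.totient_lt n hn
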